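/- arXiv:1406.5940 — 6 statements merged into one kernel-verified Lean document; each statement's English description precedes it below -/
import Mathlib

section
/- Let F be a field and σ an automorphism of F such that for every element x in the subgroup of squares (F*)², the element x⁻¹·σ(x) lies in the fixed field of σ. Then σ is the identity automorphism or F is the field with 9 elements. -/
/-!
Writing the hypothesis for `x = y²` without denominators gives `σ(σ y)² y² = σ(y)⁴`, i.e.
`σ(σ y) y = ± σ(y)²` for every `y`.

If the sign is always `+`, comparing `y` with `y + 1` gives `(σ y - y)² = 0`, so `σ = id`.

Otherwise `t = σ(y)/y` satisfies `σ t = -t` for a suitable `y`, and `2 ≠ 0`. Applying the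
identity to `a + b t` with `a, b` fixed gives `a² + b² t² = 0`, hence `t² = -1` and `a² = 1` for
every nonzero fixed `a`. So the fixed field is `{0, 1, -1} = 𝔽₃`, `σ(w)⁴ = w⁴` forces
`σ w ∈ {±w, ±t w}`, hence `σ² = id`, and `w = (w + σ w)/2 + ((w - σ w)/2t) t` exhibits `F` as
`𝔽₃ ⊕ 𝔽₃ t`, a field with nine elements.
-/

theorem RingHom.map_eq_self_of_map_map_mul_eq_sq {R : Type*} [CommRing R] [IsReduced R]
    {σ : R →+* R} (h : ∀ y, σ (σ y) * y = σ y ^ 2) (y : R) : σ y = y := by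
  have h1 := h (y + 1)
  simp only [map_add, map_one] at h1
  have hsq : (σ y - y) ^ 2 = 0 := by linear_combination y * h1 - (y + 1) * h y
  exact sub_eq_zero.mp (IsReduced.eq_zero _ ⟨2, hsq⟩)

section FixedField

variable {F : Type*} [Field F] {σ : F →+* F}

theorem map_map_sq_mul_sq_eq_pow_four
    (h : ∀ x : F, (∃ y : F, y ≠ 0 ∧ x = y ^ 2) → σ (x⁻¹ * σ x) = x⁻¹ * σ x) (y : F) :
    σ (σ y) ^ 2 * y ^ 2 = σ y ^ 4 := by
  rcases eq_or_ne y 0 with rfl | hy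
  · simp
  have hσy : σ y ≠ 0 := (map_ne_zero σ).mpr hy
  have hfix := h (y ^ 2) ⟨y, hy, rfl⟩
  simp only [map_mul, map_inv₀, map_pow] at hfix
  field_simp at hfix
  linear_combination hfix

theorem exists_map_eq_neg (hQ : ∀ y : F, σ (σ y) ^ 2 * y ^ 2 = σ y ^ 4)
    (hA : ¬ ∀ y, σ (σ y) * y = σ y ^ 2) : (2 : F) ≠ 0 ∧ ∃ t ≠ 0, σ t = -t := by
  obtain ⟨y, hy⟩ := not_forall.mp hA
  have hneg : σ (σ y) * y = -σ y ^ 2 :=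
    (sq_eq_sq_iff_eq_or_eq_neg.mp (by linear_combination hQ y)).resolve_left hy
  have hy0 : y ≠ 0 := by rintro rfl; simp at hy
  have hσy : σ y ≠ 0 := (map_ne_zero σ).mpr hy0
  refine ⟨fun h2 => hy (by linear_combination hneg - σ y ^ 2 * h2), σ y / y,
    div_ne_zero hσy hy0, ?_⟩
  rw [map_div₀]
  field_simp
  linear_combination hneg

variable {t : F}

theorem sq_add_sq_mul_sq_eq_zero (hQ : ∀ y : F, σ (σ y) ^ 2 * y ^ 2 = σ y ^ 4)
    (h2 : (2 : F) ≠ 0) (ht0 : t ≠ 0) (ht : σ t = -t) {a b : F} (ha : σ a = a) (ha0 : a ≠ 0)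
    (hb : σ b = b) (hb0 : b ≠ 0) : a ^ 2 + b ^ 2 * t ^ 2 = 0 := by
  have hQab := hQ (a + b * t)
  simp only [map_add, map_mul, map_neg, ha, hb, ht] at hQab
  have h8 : 8 * a * b * t * (a ^ 2 + b ^ 2 * t ^ 2) = 0 := by linear_combination hQab
  have h8ne : (8 : F) * a * b * t ≠ 0 := by
    have : (8 : F) = 2 ^ 3 := by norm_num
    rw [this]
    exact mul_ne_zero (mul_ne_zero (mul_ne_zero (pow_ne_zero 3 h2) ha0) hb0) ht0
  exact (mul_eq_zero.mp h8).resolve_left h8ne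

theorem sq_eq_neg_one_of_map_eq_neg (hQ : ∀ y : F, σ (σ y) ^ 2 * y ^ 2 = σ y ^ 4)
    (h2 : (2 : F) ≠ 0) (ht0 : t ≠ 0) (ht : σ t = -t) : t ^ 2 = -1 := by
  linear_combination sq_add_sq_mul_sq_eq_zero hQ h2 ht0 ht (map_one σ) one_ne_zero
    (map_one σ) one_ne_zero

theorem sq_eq_one_of_map_eq (hQ : ∀ y : F, σ (σ y) ^ 2 * y ^ 2 = σ y ^ 4)
    (h2 : (2 : F) ≠ 0) (ht0 : t ≠ 0) (ht : σ t = -t) {a : F} (ha : σ a = a) (ha0 : a ≠ 0) :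
    a ^ 2 = 1 := by
  linear_combination sq_add_sq_mul_sq_eq_zero hQ h2 ht0 ht ha ha0 (map_one σ) one_ne_zero -
    sq_eq_neg_one_of_map_eq_neg hQ h2 ht0 ht

theorem map_pow_four_eq_pow_four (hQ : ∀ y : F, σ (σ y) ^ 2 * y ^ 2 = σ y ^ 4)
    (h2 : (2 : F) ≠ 0) (ht0 : t ≠ 0) (ht : σ t = -t) (w : F) : σ w ^ 4 = w ^ 4 := by
  rcases eq_or_ne w 0 with rfl | hw
  · simp
  have hσw : σ w ≠ 0 := (map_ne_zero σ).mpr hw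
  have hfix : σ (σ w ^ 2 / w ^ 2) = σ w ^ 2 / w ^ 2 := by
    rw [map_div₀, map_pow, map_pow, div_eq_div_iff (pow_ne_zero 2 hσw) (pow_ne_zero 2 hw)]
    linear_combination hQ w
  have hsq := sq_eq_one_of_map_eq hQ h2 ht0 ht hfix (by positivity)
  field_simp at hsq
  linear_combination hsq

theorem map_map_eq_self (hQ : ∀ y : F, σ (σ y) ^ 2 * y ^ 2 = σ y ^ 4)
    (h2 : (2 : F) ≠ 0) (ht0 : t ≠ 0) (ht : σ t = -t) (w : F) : σ (σ w) = w := by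
  have ht2 := sq_eq_neg_one_of_map_eq_neg hQ h2 ht0 ht
  have h4 : (σ w ^ 2 - w ^ 2) * (σ w ^ 2 - (t * w) ^ 2) = 0 := by
    linear_combination map_pow_four_eq_pow_four hQ h2 ht0 ht w + (w ^ 4 - σ w ^ 2 * w ^ 2) * ht2
  rcases mul_eq_zero.mp h4 with h | h
  · rcases sq_eq_sq_iff_eq_or_eq_neg.mp (sub_eq_zero.mp h) with h | h <;> simp [h]
  · rcases sq_eq_sq_iff_eq_or_eq_neg.mp (sub_eq_zero.mp h) with h | h <;>
      simp only [h, map_mul, map_neg, ht] <;> linear_combination -w * ht2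

theorem exists_eq_add_mul_of_map_map_eq_self (h2 : (2 : F) ≠ 0) (ht0 : t ≠ 0) (ht : σ t = -t)
    (hσσ : ∀ w, σ (σ w) = w) (w : F) :
    ∃ a b : F, σ a = a ∧ σ b = b ∧ w = a + b * t := by
  refine ⟨(w + σ w) / 2, (w - σ w) / (2 * t), ?_, ?_, ?_⟩
  · simp only [map_div₀, map_add, map_ofNat, hσσ, add_comm]
  · rw [map_div₀, map_sub, map_mul, map_ofNat, hσσ, ht]
    field_simp
    ring
  · field_simp
    ring

theorem eq_and_eq_of_add_mul_eq_add_mul (h2 : (2 : F) ≠ 0) (ht0 : t ≠ 0) (ht : σ t = -t)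
    {a b c d : F} (ha : σ a = a) (hb : σ b = b) (hc : σ c = c) (hd : σ d = d)
    (h : a + b * t = c + d * t) : a = c ∧ b = d := by
  have hσ := congrArg σ h
  simp only [map_add, map_mul, ha, hb, hc, hd, ht] at hσ
  have hac : 2 * (a - c) = 0 := by linear_combination h + hσ
  have hbd : 2 * (b - d) * t = 0 := by linear_combination h - hσ
  exact ⟨sub_eq_zero.mp ((mul_eq_zero.mp hac).resolve_left h2),
    sub_eq_zero.mp ((mul_eq_zero.mp ((mul_eq_zero.mp hbd).resolve_right ht0)).resolve_left h2)⟩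

theorem natCard_eq_nine_of_map_eq_neg (hQ : ∀ y : F, σ (σ y) ^ 2 * y ^ 2 = σ y ^ 4)
    (h2 : (2 : F) ≠ 0) (ht0 : t ≠ 0) (ht : σ t = -t) : Nat.card F = 9 := by
  have h3 : ((3 : ℕ) : F) = 0 := by
    have h4 := sq_eq_one_of_map_eq hQ h2 ht0 ht (map_ofNat σ 2) h2
    push_cast
    linear_combination h4
  have : CharP F 3 := (CharP.charP_iff_prime_eq_zero Nat.prime_three).mpr h3
  let ι : ZMod 3 →+* F := ZMod.castHom dvd_rfl F
  have hι : ∀ c, σ (ι c) = ι c := RingHom.congr_fun (RingHom.ext_zmod (σ.comp ι) ι)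
  have hfixed : ∀ a, σ a = a → ∃ c, ι c = a := by
    intro a ha
    rcases eq_or_ne a 0 with rfl | ha0
    · exact ⟨0, map_zero ι⟩
    rcases sq_eq_one_iff.mp (sq_eq_one_of_map_eq hQ h2 ht0 ht ha ha0) with rfl | rfl
    · exact ⟨1, map_one ι⟩
    · exact ⟨-1, by simp⟩
  let f : ZMod 3 × ZMod 3 → F := fun p => ι p.1 + ι p.2 * t
  have hf : Function.Bijective f := by
    constructor
    · rintro ⟨c, d⟩ ⟨c', d'⟩ h
      obtain ⟨hc, hd⟩ := eq_and_eq_of_add_mul_eq_add_mul h2 ht0 ht (hι c) (hι d) (hι c')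
        (hι d') h
      exact Prod.ext (ι.injective hc) (ι.injective hd)
    · intro w
      obtain ⟨a, b, ha, hb, rfl⟩ :=
        exists_eq_add_mul_of_map_map_eq_self h2 ht0 ht (map_map_eq_self hQ h2 ht0 ht) w
      obtain ⟨c, rfl⟩ := hfixed a ha
      obtain ⟨d, rfl⟩ := hfixed b hb
      exact ⟨(c, d), rfl⟩
  rw [← Nat.card_eq_of_bijective f hf, Nat.card_prod, Nat.card_zmod]

end FixedField

/-- Let `F` be a field and `σ` an automorphism of `F` such that for every
element `x` in the subgroup of squares `(F*)²`, the element `x⁻¹ · σ(x)` lies in the fixed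
field of `σ`.  Then `σ` is the identity automorphism or `F` is the field with 9 elements. -/
theorem stmt_0 {F : Type*} [Field F] (σ : F ≃+* F)
    (h : ∀ x : F, (∃ y : F, y ≠ 0 ∧ x = y ^ 2) → σ (x⁻¹ * σ x) = x⁻¹ * σ x) :
    σ = RingEquiv.refl F ∨ Nat.card F = 9 := by
  have hQ := map_map_sq_mul_sq_eq_pow_four (σ := (σ : F →+* F)) h
  by_cases hA : ∀ y, σ (σ y) * y = σ y ^ 2
  · left
    exact RingEquiv.ext (RingHom.map_eq_self_of_map_map_mul_eq_sq (σ := (σ : F →+* F)) hA)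
  · right
    obtain ⟨h2, t, ht0, ht⟩ := exists_map_eq_neg (σ := (σ : F →+* F)) hQ hA
    exact natCard_eq_nine_of_map_eq_neg hQ h2 ht0 ht
end

section
/- Let K and L be commutative fields and q : K → L a multiplicative quadratic map. Then there exists a pair {φ₁, φ₂} of field monomorphisms from K into the algebraic closure of L such that q(a) = φ₁(a)·φ₂(a) for all a ∈ K. -/
/-!
If `q = φ₁ φ₂`, then `φ₁ a` and `φ₂ a` are the roots of `X² - t(a) X + q(a)`, where
`t(a) = f(a, 1)` and `f` is the polar form of `q`. Polarizing `q(xy) = q(x) q(y)` gives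
`f(ac, bd) + f(ad, bc) = f(a, b) f(c, d)`, from which all the needed identities between `q`, `t`
and `f` follow. If for some `a₀` these roots `r ≠ s` are distinct, `φ₁` and `φ₂` are recovered by
solving the linear system `t(a) = φ₁ a + φ₂ a`, `f(a, a₀) = s φ₁ a + r φ₂ a`. Otherwise every
discriminant `t² - 4q` vanishes, and `φ₁ = φ₂` is `t / 2`, or in characteristic two the square
root of the additive map `q`.
-/

/-- A multiplicative quadratic map `q : K → L` between unital rings:
`q(ab) = q(a)q(b)`, `q(n·1) = n²` for all integers `n`, and
`f(a,b) = q(a+b) − q(a) − q(b)` is biadditive. -/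
structure IsMultiplicativeQuadraticMap {K L : Type*} [Ring K] [Ring L] (q : K → L) : Prop where
  map_mul : ∀ a b : K, q (a * b) = q a * q b
  map_int : ∀ n : ℤ, q (n : K) = (n : L) ^ 2
  biadd_left : ∀ a a' b : K,
    (q (a + a' + b) - q (a + a') - q b) =
      (q (a + b) - q a - q b) + (q (a' + b) - q a' - q b)
  biadd_right : ∀ a b b' : K,
    (q (a + (b + b')) - q a - q (b + b')) =
      (q (a + b) - q a - q b) + (q (a + b') - q a - q b')

open QuadraticMap (polar polar_comm)
open Polynomial

theorem IsAlgClosed.exists_add_eq_and_mul_eq {M : Type*} [Field M] [IsAlgClosed M] (u v : M) :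
    ∃ r s : M, r + s = u ∧ r * s = v := by
  obtain ⟨r, hr⟩ := IsAlgClosed.exists_root (C 1 * X ^ 2 + C (-u) * X + C v)
    (by rw [degree_quadratic one_ne_zero]; decide)
  refine ⟨r, u - r, by ring, ?_⟩
  simp only [IsRoot, eval_add, eval_mul, eval_C, eval_pow, eval_X] at hr
  linear_combination -hr

namespace IsMultiplicativeQuadraticMap

theorem ringHom_comp {K L L' : Type*} [Ring K] [Ring L] [Ring L'] {q : K → L}
    (hq : IsMultiplicativeQuadraticMap q) (ι : L →+* L') :
    IsMultiplicativeQuadraticMap (ι ∘ q) where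
  map_mul a b := by simp [hq.map_mul]
  map_int n := by simp [hq.map_int]
  biadd_left a a' b := by
    simpa only [Function.comp, map_sub, map_add] using congrArg ι (hq.biadd_left a a' b)
  biadd_right a b b' := by
    simpa only [Function.comp, map_sub, map_add] using congrArg ι (hq.biadd_right a b b')

section Identities

variable {K L : Type*} [CommRing K] [CommRing L] {q : K → L}

def trace (q : K → L) (a : K) : L := polar q a 1

variable (hq : IsMultiplicativeQuadraticMap q)
include hq

theorem map_zero : q 0 = 0 := by simpa using hq.map_int 0

theorem map_one : q 1 = 1 := by simpa using hq.map_int 1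

theorem polar_self (a : K) : polar q a a = 2 * q a := by
  have h2 : q 2 = 4 := by
    have h := hq.map_int 2
    push_cast at h
    rw [h]
    norm_num
  rw [polar, ← two_mul, hq.map_mul, h2]
  ring

theorem polar_add_left (a a' b : K) : polar q (a + a') b = polar q a b + polar q a' b :=
  hq.biadd_left a a' b

theorem polar_add_right (a b b' : K) : polar q a (b + b') = polar q a b + polar q a b' :=
  hq.biadd_right a b b'

theorem trace_add (a b : K) : trace q (a + b) = trace q a + trace q b :=
  hq.polar_add_left a b 1

theorem trace_zero : trace q 0 = 0 := by simp [trace, polar, hq.map_zero]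

theorem trace_one : trace q 1 = 2 := by rw [trace, hq.polar_self, hq.map_one, mul_one]

theorem polar_mul_mul_right (a b c : K) : polar q (a * c) (b * c) = polar q a b * q c := by
  simp only [polar, ← add_mul, hq.map_mul]
  ring

theorem polar_mul_mul_add_polar_mul_mul (a b c d : K) :
    polar q (a * c) (b * d) + polar q (a * d) (b * c) = polar q a b * polar q c d := by
  have key := hq.map_mul (a + b) (c + d)
  rw [show (a + b) * (c + d) = (a * c + b * d) + (a * d + b * c) by ring,
    QuadraticMap.map_add q (a * c + b * d), QuadraticMap.map_add q (a * c),
    QuadraticMap.map_add q (a * d), QuadraticMap.map_add q a, QuadraticMap.map_add q c,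
    hq.polar_add_left, hq.polar_add_right, hq.polar_add_right] at key
  have hac : polar q (a * c) (a * d) = polar q c d * q a := by
    rw [mul_comm a c, mul_comm a d, hq.polar_mul_mul_right]
  have hbd : polar q (b * d) (b * c) = polar q c d * q b := by
    rw [polar_comm, mul_comm b c, mul_comm b d, hq.polar_mul_mul_right]
  have hc : polar q (a * c) (b * c) = polar q a b * q c := hq.polar_mul_mul_right a b c
  have hd : polar q (b * d) (a * d) = polar q a b * q d := by
    rw [polar_comm, hq.polar_mul_mul_right]
  rw [hq.map_mul a c, hq.map_mul b d, hq.map_mul a d, hq.map_mul b c] at key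
  linear_combination key - hac - hbd - hc - hd

theorem trace_mul_trace (a b : K) : trace q a * trace q b = trace q (a * b) + polar q a b := by
  simpa [trace] using (hq.polar_mul_mul_add_polar_mul_mul a 1 b 1).symm

theorem polar_mul_self_left (a c : K) :
    polar q (a * a) c = trace q a * polar q a c - q a * trace q c := by
  have h := hq.polar_mul_mul_add_polar_mul_mul a c a 1
  have h1 : polar q a (c * a) = trace q c * q a := by
    have h' := hq.polar_mul_mul_right c 1 a
    rw [one_mul] at h'
    rw [polar_comm, h', trace]
  rw [mul_one, mul_one, h1] at h
  rw [trace]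
  linear_combination h

theorem trace_mul_polar_add_trace_mul_polar (a b c : K) :
    trace q a * polar q b c + trace q b * polar q a c =
      2 * polar q (a * b) c + polar q a b * trace q c := by
  have h1 := hq.polar_mul_mul_add_polar_mul_mul a c b 1
  have h2 := hq.polar_mul_mul_add_polar_mul_mul b c a 1
  have h3 := hq.polar_mul_mul_add_polar_mul_mul a b c 1
  simp only [mul_one] at h1 h2 h3
  rw [mul_comm b a, mul_comm c a, polar_comm q b (a * c)] at h2
  rw [mul_comm c b] at h1
  rw [trace, trace, trace]
  linear_combination -h1 - h2 + h3

theorem polar_mul_polar (a b c : K) :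
    polar q a c * polar q b c =
      trace q c * polar q (a * b) c + q c * (trace q a * trace q b - 2 * trace q (a * b)) := by
  have h := hq.polar_mul_mul_add_polar_mul_mul a c b c
  rw [polar_comm q (a * b), hq.polar_mul_self_left, polar_comm q c, mul_comm c b,
    hq.polar_mul_mul_right] at h
  linear_combination -h - q c * hq.trace_mul_trace a b

theorem polar_sq (a c : K) :
    polar q a c ^ 2 = trace q c * trace q a * polar q a c - q a * trace q c ^ 2 -
      q c * trace q a ^ 2 + 4 * q a * q c := by
  have h := hq.polar_mul_polar a a c
  have hsq := hq.trace_mul_trace a a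
  rw [hq.polar_self] at hsq
  rw [hq.polar_mul_self_left] at h
  linear_combination h + 2 * q c * hsq

end Identities

section RingHoms

variable {K M : Type*} [CommRing K] [Field M] {q : K → M} (hq : IsMultiplicativeQuadraticMap q)
include hq

def ringHomOfRoots (a₀ : K) {r s : M} (hsum : r + s = trace q a₀) (hprod : r * s = q a₀)
    (hne : r ≠ s) : K →+* M where
  toFun a := (polar q a a₀ - r * trace q a) / (s - r)
  map_one' := by
    have : s - r ≠ 0 := sub_ne_zero.mpr hne.symm
    rw [polar_comm, ← trace, hq.trace_one, ← hsum]
    field_simp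
    ring
  map_mul' a b := by
    have : s - r ≠ 0 := sub_ne_zero.mpr hne.symm
    have e1 := hq.polar_mul_polar a b a₀
    have e2 := hq.trace_mul_polar_add_trace_mul_polar a b a₀
    have e3 := hq.trace_mul_trace a b
    rw [← hsum, ← hprod] at e1
    rw [← hsum] at e2
    field_simp
    linear_combination -e1 + r * e2 - r * (r + s) * e3
  map_zero' := by simp [polar, hq.map_zero, hq.trace_zero]
  map_add' a b := by
    rw [hq.polar_add_left, hq.trace_add, ← add_div]
    ring

theorem ringHomOfRoots_mul_ringHomOfRoots (a₀ : K) {r s : M} (hsum : r + s = trace q a₀)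
    (hprod : r * s = q a₀) (hne : r ≠ s) (a : K) :
    hq.ringHomOfRoots a₀ hsum hprod hne a *
      hq.ringHomOfRoots a₀ ((add_comm s r).trans hsum) ((mul_comm s r).trans hprod) hne.symm a =
        q a := by
  have : s - r ≠ 0 := sub_ne_zero.mpr hne.symm
  have : r - s ≠ 0 := sub_ne_zero.mpr hne
  have h := hq.polar_sq a a₀
  rw [← hsum, ← hprod] at h
  simp only [ringHomOfRoots, RingHom.coe_mk, MonoidHom.coe_mk, OneHom.coe_mk]
  field_simp
  linear_combination h

theorem two_mul_trace_mul (h2 : (2 : M) ≠ 0) (hD : ∀ a, trace q a ^ 2 = 4 * q a) (a b : K) :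
    2 * trace q (a * b) = trace q a * trace q b := by
  have hab : 2 * (2 * polar q a b - trace q a * trace q b) = 0 := by
    have h := hD (a + b)
    rw [hq.trace_add, QuadraticMap.map_add q a b] at h
    linear_combination hD a + hD b - h
  have hpolar : 2 * polar q a b = trace q a * trace q b := by
    linear_combination (mul_eq_zero.mp hab).resolve_left h2
  linear_combination -hpolar - 2 * hq.trace_mul_trace a b

theorem exists_ringHom_mul_self_of_two_ne_zero (h2 : (2 : M) ≠ 0)
    (hD : ∀ a, trace q a ^ 2 = 4 * q a) : ∃ φ : K →+* M, ∀ a, q a = φ a * φ a := by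
  let φ : K →+* M :=
    { toFun a := trace q a / 2
      map_one' := by rw [hq.trace_one, div_self h2]
      map_mul' a b := by
        field_simp
        linear_combination hq.two_mul_trace_mul h2 hD a b
      map_zero' := by rw [hq.trace_zero, zero_div]
      map_add' a b := by rw [hq.trace_add, add_div] }
  refine ⟨φ, fun a => ?_⟩
  change q a = trace q a / 2 * (trace q a / 2)
  field_simp
  linear_combination -hD a

theorem exists_ringHom_mul_self_of_two_eq_zero [PerfectField M] (h2 : (2 : M) = 0)
    (ht : ∀ a, trace q a = 0) : ∃ φ : K →+* M, ∀ a, q a = φ a * φ a := by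
  have : CharP M 2 := CharTwo.of_one_ne_zero_of_two_eq_zero one_ne_zero h2
  let ψ : K →+* M :=
    { toFun := q
      map_one' := hq.map_one
      map_mul' := hq.map_mul
      map_zero' := hq.map_zero
      map_add' a b := by
        have h := hq.trace_mul_trace a b
        rw [ht, ht, ht, zero_mul, zero_add] at h
        linear_combination QuadraticMap.map_add q a b - h }
  refine ⟨(frobeniusEquiv M 2).symm.toRingHom.comp ψ, fun a => ?_⟩
  rw [← sq]
  exact (frobeniusEquiv_symm_pow_p M 2 (q a)).symm

theorem exists_ringHom_mul_eq [IsAlgClosed M] :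
    ∃ φ₁ φ₂ : K →+* M, ∀ a, q a = φ₁ a * φ₂ a := by
  by_cases hD : ∀ a, trace q a ^ 2 = 4 * q a
  · obtain ⟨φ, hφ⟩ : ∃ φ : K →+* M, ∀ a, q a = φ a * φ a := by
      by_cases h2 : (2 : M) = 0
      · have ht : ∀ a, trace q a = 0 := fun a => pow_eq_zero_iff two_ne_zero |>.mp <| by
          rw [hD, show (4 : M) = 2 * 2 by norm_num, h2, zero_mul, zero_mul]
        exact hq.exists_ringHom_mul_self_of_two_eq_zero h2 ht
      · exact hq.exists_ringHom_mul_self_of_two_ne_zero h2 hD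
    exact ⟨φ, φ, hφ⟩
  · obtain ⟨a₀, ha₀⟩ := not_forall.mp hD
    obtain ⟨r, s, hsum, hprod⟩ := IsAlgClosed.exists_add_eq_and_mul_eq (trace q a₀) (q a₀)
    have hne : r ≠ s := by
      rintro rfl
      exact ha₀ (by rw [← hsum, ← hprod]; ring)
    exact ⟨_, _, fun a => (hq.ringHomOfRoots_mul_ringHomOfRoots a₀ hsum hprod hne a).symm⟩

end RingHoms

end IsMultiplicativeQuadraticMap

/-- Let `K` and `L` be commutative fields and `q : K → L` a multiplicative
quadratic map.  Then there exists a pair `{φ₁, φ₂}` of field monomorphisms from `K` into the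
algebraic closure of `L` such that `q(a) = φ₁(a) · φ₂(a)` for all `a ∈ K`. -/
theorem stmt_2 {K L : Type*} [Field K] [Field L] (q : K → L)
    (hq : IsMultiplicativeQuadraticMap q) :
    ∃ φ₁ φ₂ : K →+* AlgebraicClosure L, ∀ a : K,
      algebraMap L (AlgebraicClosure L) (q a) = φ₁ a * φ₂ a :=
  (hq.ringHom_comp (algebraMap L (AlgebraicClosure L))).exists_ringHom_mul_eq
end

section
/- Let M(U, τ) be a special Moufang set with U abelian, τ = μ_e, and a ∈ U^#. Then for all b, c ∈ U: (aτ)·h_{a+b,c} = −2c + (aτ)·h_{b,c}. -/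
/-!
Everything rests on `(aτ)h_{a,d} = -2d`; the statement then follows from the cocycle identity
`h_{a+b,c} + h_{a,b} = h_{a,b+c} + h_{b,c}`.

The Hua maps `h_a` are additive, since `μ_a` conjugates `U_0` onto `U_∞`. As `U` is abelian and
the Moufang set is special, negation commutes with `τ` and with every `μ_a`, and conjugating the
defining double coset by it gives `μ_{-a} = μ_a`; together with `μ_{-a} = μ_a⁻¹` every `μ_a`,
in particular `τ = μ_e`, is an involution. This pins down
`μ_a = α_{-aτ}^τ α_a α_{-aτ}^τ`, and evaluating that factorisation yields `(aτ)h_a = -a` and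
`((x+y)τ)h_x = (xτ + yτ)τ - x`. Applying the latter to `(a + d, -d)` and to `(-d, a + d)`
and using `h_{-d} = h_d` gives `(aτ)h_{a,d} = -2d`.
-/

variable {U : Type*}

/-- The translation `α_a` on `X = U ∪ {∞}`, where `none` plays the role of the point `∞`
and `some 0` plays the role of the point `0`. -/
def alphaPerm [AddGroup U] (a : U) : Equiv.Perm (Option U) :=
  Equiv.optionCongr (Equiv.addRight a)

/-- The image in `U` of the point `a ∈ U ⊆ X = U ∪ {∞}` under a permutation of `X`
(defaulting to `0` in the degenerate case where the image is `∞`). -/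
def pact [Zero U] (g : Equiv.Perm (Option U)) (a : U) : U := (g (some a)).getD 0

/-- A Moufang set `M(U, τ)` in the algebraic description of De Medts–Segev:
the set is `X = U ∪ {∞}` (modelled by `Option U`), the root group at `∞` is
`U_∞ = {α_a | a ∈ U}`, the root group at `0` is `U_0 = U_∞^τ` (here written with
Lean's left-composition convention, so `α_g^τ = τ * α_g * τ⁻¹`), for `a ≠ 0` the map
`μ a` is the unique element of the double coset `U_0 · α_a · U_0` interchanging
`0` and `∞`, and the Moufang condition holds: conjugation by `μ a` interchanges
the root groups `U_∞` and `U_0`. -/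
structure MoufangSet (U : Type*) [AddGroup U] where
  τ : Equiv.Perm (Option U)
  τ_inf : τ none = some 0
  τ_zero : τ (some 0) = none
  μ : U → Equiv.Perm (Option U)
  μ_mem : ∀ a : U, a ≠ 0 → ∃ g h : U,
    μ a = (τ * alphaPerm g * τ⁻¹) * alphaPerm a * (τ * alphaPerm h * τ⁻¹)
  μ_inf : ∀ a : U, a ≠ 0 → μ a none = some 0
  μ_zero : ∀ a : U, a ≠ 0 → μ a (some 0) = none
  μ_unique : ∀ a : U, a ≠ 0 → ∀ m : Equiv.Perm (Option U),
    (∃ g h : U, m = (τ * alphaPerm g * τ⁻¹) * alphaPerm a * (τ * alphaPerm h * τ⁻¹)) →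
    m none = some 0 → m (some 0) = none → m = μ a
  moufang₁ : ∀ a : U, a ≠ 0 → ∀ b : U, ∃ c : U,
    μ a * alphaPerm b * (μ a)⁻¹ = τ * alphaPerm c * τ⁻¹
  moufang₂ : ∀ a : U, a ≠ 0 → ∀ b : U, ∃ c : U,
    μ a * (τ * alphaPerm b * τ⁻¹) * (μ a)⁻¹ = alphaPerm c

namespace MoufangSet

variable [AddGroup U] (M : MoufangSet U)

/-- The Hua group of `M(U, τ)`: the subgroup generated by the Hua maps `h_a = τ μ_a`
(right-action convention: apply `τ` first, then `μ_a`; with Lean's left-composition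
convention this is `μ_a * τ`). -/
def huaGroup : Subgroup (Equiv.Perm (Option U)) :=
  Subgroup.closure {g | ∃ a : U, a ≠ 0 ∧ g = M.μ a * M.τ}

/-- A Moufang set `M(U, τ)` is special if `(−a)τ = −(aτ)` for all nontrivial `a ∈ U`. -/
def Special : Prop := ∀ a : U, a ≠ 0 → pact M.τ (-a) = -(pact M.τ a)

open Classical in
/-- The Hua map `h_a` of `a ∈ U`, as a map `U → U` (`x ↦ x h_a`, i.e. apply `τ` then
`μ_a` to the point `x`), with `h_0` defined to be the constant zero map. -/
noncomputable def hmap (a x : U) : U := if a = 0 then 0 else pact (M.μ a * M.τ) x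

/-- The endomorphism `h_{a,b} : x ↦ x h_{a+b} − x h_a − x h_b`. -/
noncomputable def hmap₂ (a b x : U) : U := M.hmap (a + b) x - M.hmap a x - M.hmap b x

end MoufangSet

section Translations

variable [AddGroup U]

@[simp] theorem alphaPerm_some (a x : U) : alphaPerm a (some x) = some (x + a) := rfl

@[simp] theorem alphaPerm_none (a : U) : alphaPerm a none = none := rfl

@[simp] theorem alphaPerm_zero : alphaPerm (0 : U) = 1 := by
  ext (_ | x) <;> simp

theorem alphaPerm_add (a b : U) : alphaPerm (a + b) = alphaPerm b * alphaPerm a := by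
  ext (_ | x) <;> simp [add_assoc]

theorem alphaPerm_neg (a : U) : alphaPerm (-a) = (alphaPerm a)⁻¹ :=
  eq_inv_of_mul_eq_one_left (by rw [← alphaPerm_add, add_neg_cancel, alphaPerm_zero])

theorem alphaPerm_injective : Function.Injective (alphaPerm : U → Equiv.Perm (Option U)) := by
  intro a b h
  simpa using congrArg (fun g : Equiv.Perm (Option U) => g (some 0)) h

end Translations

section PointImage

variable [Zero U] {g : Equiv.Perm (Option U)}

theorem pact_eq_of_apply_some {x y : U} (h : g (some x) = some y) : pact g x = y := by
  simp [pact, h]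

theorem apply_some_of_apply_none (hg : g none = none) (x : U) :
    g (some x) = some (pact g x) := by
  cases hgx : g (some x) with
  | none => exact absurd (g.injective (hgx.trans hg.symm)) (Option.some_ne_none x)
  | some y => rw [pact_eq_of_apply_some hgx]

theorem apply_some_of_apply_zero (hg : g (some 0) = none) {x : U} (hx : x ≠ 0) :
    g (some x) = some (pact g x) := by
  cases hgx : g (some x) with
  | none => exact absurd (Option.some_injective _ (g.injective (hgx.trans hg.symm))) hx
  | some y => rw [pact_eq_of_apply_some hgx]

end PointImage

def optionNeg [InvolutiveNeg U] : Equiv.Perm (Option U) := Equiv.optionCongr (Equiv.neg U)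

@[simp] theorem optionNeg_some [InvolutiveNeg U] (x : U) : optionNeg (some x) = some (-x) := rfl

@[simp] theorem optionNeg_none [InvolutiveNeg U] : optionNeg (none : Option U) = none := rfl

theorem optionNeg_mul_self [InvolutiveNeg U] :
    optionNeg * optionNeg = (1 : Equiv.Perm (Option U)) := by
  ext (_ | x) <;> simp [Equiv.Perm.mul_apply]

theorem semiconjBy_optionNeg_alphaPerm [AddCommGroup U] (a : U) :
    SemiconjBy optionNeg (alphaPerm a) (alphaPerm (-a)) := by
  ext (_ | x) <;> simp [Equiv.Perm.mul_apply, add_comm]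

namespace MoufangSet

section AddGroup

variable [AddGroup U] (M : MoufangSet U)

def alphaTau (u : U) : Equiv.Perm (Option U) := M.τ * alphaPerm u * M.τ⁻¹

theorem alphaTau_apply_tau (u : U) (w : Option U) :
    M.alphaTau u (M.τ w) = M.τ (alphaPerm u w) := by
  simp [alphaTau, Equiv.Perm.mul_apply]

theorem alphaTau_add (u v : U) : M.alphaTau (u + v) = M.alphaTau v * M.alphaTau u := by
  simp only [alphaTau, alphaPerm_add]
  group

theorem alphaTau_neg (u : U) : M.alphaTau (-u) = (M.alphaTau u)⁻¹ := by
  simp only [alphaTau, alphaPerm_neg]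
  group

theorem tau_some_eq_none_iff {v : U} : M.τ (some v) = none ↔ v = 0 := by
  rw [← M.τ_zero, M.τ.apply_eq_iff_eq, Option.some_inj]

theorem pact_tau_zero : pact M.τ 0 = 0 := by
  simp [pact, M.τ_zero]

theorem pact_tau_neg (hs : M.Special) (x : U) : pact M.τ (-x) = -pact M.τ x := by
  by_cases hx : x = 0
  · simp [hx, pact_tau_zero]
  · exact hs x hx

theorem mu_mem_doubleCoset {a : U} (ha : a ≠ 0) :
    ∃ g h : U, M.μ a = M.alphaTau g * alphaPerm a * M.alphaTau h :=
  M.μ_mem a ha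

theorem eq_mu_of_swap {a : U} (ha : a ≠ 0) {m : Equiv.Perm (Option U)}
    (hm : ∃ g h : U, m = M.alphaTau g * alphaPerm a * M.alphaTau h)
    (h_inf : m none = some 0) (h_zero : m (some 0) = none) : m = M.μ a :=
  M.μ_unique a ha m hm h_inf h_zero

theorem doubleCoset_inv (g a h : U) :
    (M.alphaTau g * alphaPerm a * M.alphaTau h)⁻¹ =
      M.alphaTau (-h) * alphaPerm (-a) * M.alphaTau (-g) := by
  rw [alphaTau_neg, alphaTau_neg, alphaPerm_neg]
  group

theorem mu_neg {a : U} (ha : a ≠ 0) : M.μ (-a) = (M.μ a)⁻¹ := by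
  obtain ⟨g, h, hgh⟩ := M.mu_mem_doubleCoset ha
  refine (M.eq_mu_of_swap (neg_ne_zero.2 ha) ⟨-h, -g, by rw [hgh, doubleCoset_inv]⟩ ?_ ?_).symm
  · rw [Equiv.Perm.inv_eq_iff_eq, M.μ_zero a ha]
  · rw [Equiv.Perm.inv_eq_iff_eq, M.μ_inf a ha]

theorem hmap_zero_left (x : U) : M.hmap 0 x = 0 := if_pos rfl

theorem mu_tau_apply_some {a : U} (ha : a ≠ 0) (x : U) :
    M.μ a (M.τ (some x)) = some (M.hmap a x) := by
  rw [hmap, if_neg ha, ← apply_some_of_apply_none (g := M.μ a * M.τ)]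
  · rfl
  · simp [Equiv.Perm.mul_apply, M.τ_inf, M.μ_zero a ha]

/-- This is `moufang₂`, with the translation identified by evaluating at `0`. -/
theorem mu_mul_alphaTau_mul_inv {a : U} (ha : a ≠ 0) (x : U) :
    M.μ a * M.alphaTau x * (M.μ a)⁻¹ = alphaPerm (M.hmap a x) := by
  obtain ⟨c, hc⟩ := M.moufang₂ a ha x
  change M.μ a * M.alphaTau x * (M.μ a)⁻¹ = alphaPerm c at hc
  have h0 := congrArg (fun g : Equiv.Perm (Option U) => g (some 0)) hc
  have hinv : (M.μ a)⁻¹ (some 0) = M.τ (some 0) := by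
    rw [Equiv.Perm.inv_eq_iff_eq, M.τ_zero, M.μ_inf a ha]
  simp only [Equiv.Perm.mul_apply, hinv, alphaTau_apply_tau, alphaPerm_some, zero_add,
    M.mu_tau_apply_some ha, Option.some_inj] at h0
  rw [hc, h0]

theorem hmap_add (a x y : U) : M.hmap a (x + y) = M.hmap a x + M.hmap a y := by
  by_cases ha : a = 0
  · simp [ha, hmap_zero_left]
  apply alphaPerm_injective
  rw [alphaPerm_add, ← M.mu_mul_alphaTau_mul_inv ha, ← M.mu_mul_alphaTau_mul_inv ha,
    ← M.mu_mul_alphaTau_mul_inv ha, alphaTau_add]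
  group

theorem hmap_neg_right (a x : U) : M.hmap a (-x) = -M.hmap a x :=
  (AddMonoidHom.mk' (M.hmap a) (M.hmap_add a)).map_neg x

theorem commute_optionNeg_tau (hs : M.Special) : Commute optionNeg M.τ := by
  ext (_ | x)
  · simp [Equiv.Perm.mul_apply, M.τ_inf]
  by_cases hx : x = 0
  · simp [Equiv.Perm.mul_apply, hx, M.τ_zero]
  · simp [Equiv.Perm.mul_apply, apply_some_of_apply_zero M.τ_zero hx,
      apply_some_of_apply_zero M.τ_zero (neg_ne_zero.2 hx), hs x hx]

/-- Negation commutes with `μ_a` because it commutes with `τ` and with the additive Hua map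
`μ_a τ`. -/
theorem commute_optionNeg_mu (hs : M.Special) {a : U} (ha : a ≠ 0) :
    Commute optionNeg (M.μ a) := by
  have hua : Commute optionNeg (M.μ a * M.τ) := by
    ext (_ | x)
    · simp [Equiv.Perm.mul_apply, M.τ_inf, M.μ_zero a ha]
    · simp only [Equiv.Perm.mul_apply, optionNeg_some, M.mu_tau_apply_some ha, hmap_neg_right]
  simpa using hua.mul_right (M.commute_optionNeg_tau hs).inv_right

theorem tau_apply_tau (hτ : M.τ * M.τ = 1) (w : Option U) : M.τ (M.τ w) = w := by
  rw [← Equiv.Perm.mul_apply, hτ, Equiv.Perm.one_apply]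

theorem tau_some_pact_tau (hτ : M.τ * M.τ = 1) {x : U} (hx : x ≠ 0) :
    M.τ (some (pact M.τ x)) = some x := by
  rw [← apply_some_of_apply_zero M.τ_zero hx, M.tau_apply_tau hτ]

theorem doubleCoset_apply_zero (hτ : M.τ * M.τ = 1) {a : U} (ha : a ≠ 0) (g h : U) :
    (M.alphaTau g * alphaPerm a * M.alphaTau h) (some 0) = M.τ (some (pact M.τ a + g)) := by
  rw [Equiv.Perm.mul_apply, Equiv.Perm.mul_apply, ← M.τ_inf, alphaTau_apply_tau,
    alphaPerm_none, M.τ_inf, alphaPerm_some, zero_add, ← M.tau_some_pact_tau hτ ha,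
    alphaTau_apply_tau, alphaPerm_some]

theorem eq_neg_of_doubleCoset_apply_zero (hτ : M.τ * M.τ = 1) {a g h : U} (ha : a ≠ 0)
    (h0 : (M.alphaTau g * alphaPerm a * M.alphaTau h) (some 0) = none) :
    g = -pact M.τ a := by
  rw [M.doubleCoset_apply_zero hτ ha, tau_some_eq_none_iff] at h0
  exact eq_neg_of_add_eq_zero_right h0

theorem mu_eq_doubleCoset (hs : M.Special) (hτ : M.τ * M.τ = 1) {a : U} (ha : a ≠ 0) :
    M.μ a = M.alphaTau (-pact M.τ a) * alphaPerm a * M.alphaTau (-pact M.τ a) := by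
  obtain ⟨g, h, hgh⟩ := M.mu_mem_doubleCoset ha
  have hg : g = -pact M.τ a :=
    M.eq_neg_of_doubleCoset_apply_zero hτ ha (hgh ▸ M.μ_zero a ha)
  have hh : -h = -pact M.τ (-a) := by
    refine M.eq_neg_of_doubleCoset_apply_zero hτ (h := -g) (neg_ne_zero.2 ha) ?_
    rw [← doubleCoset_inv, ← hgh, Equiv.Perm.inv_eq_iff_eq, M.μ_inf a ha]
  rw [M.pact_tau_neg hs, neg_inj] at hh
  rw [hgh, hg, hh]

theorem hmap_pact_tau_self (hs : M.Special) (hτ : M.τ * M.τ = 1) {x : U} (hx : x ≠ 0) :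
    M.hmap x (pact M.τ x) = -x := by
  have key : M.μ x (M.τ (some (pact M.τ x))) = some (-x) := by
    rw [M.mu_eq_doubleCoset hs hτ hx]
    simp only [Equiv.Perm.mul_apply, alphaTau_apply_tau, alphaPerm_some, add_neg_cancel,
      M.τ_zero, alphaPerm_none]
    rw [← M.τ_zero, alphaTau_apply_tau, alphaPerm_some, zero_add, ← M.pact_tau_neg hs,
      M.tau_some_pact_tau hτ (neg_ne_zero.2 hx)]
  exact Option.some_injective _ ((M.mu_tau_apply_some hx _).symm.trans key)

end AddGroup

section AddCommGroup

variable [AddCommGroup U] (M : MoufangSet U)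

theorem semiconjBy_optionNeg_alphaTau (hs : M.Special) (u : U) :
    SemiconjBy optionNeg (M.alphaTau u) (M.alphaTau (-u)) :=
  ((M.commute_optionNeg_tau hs).semiconjBy.mul_right
    (semiconjBy_optionNeg_alphaPerm u)).mul_right (M.commute_optionNeg_tau hs).inv_right

theorem mu_neg_eq_mu (hs : M.Special) {a : U} (ha : a ≠ 0) : M.μ (-a) = M.μ a := by
  obtain ⟨g, h, hgh⟩ := M.mu_mem_doubleCoset ha
  have hconj : optionNeg * M.μ a * optionNeg = M.μ (-a) := by
    refine M.eq_mu_of_swap (neg_ne_zero.2 ha) ⟨-g, -h, ?_⟩ ?_ ?_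
    · rw [hgh, (((M.semiconjBy_optionNeg_alphaTau hs g).mul_right
        (semiconjBy_optionNeg_alphaPerm a)).mul_right (M.semiconjBy_optionNeg_alphaTau hs h)).eq,
        mul_assoc, optionNeg_mul_self, mul_one]
    · simp [Equiv.Perm.mul_apply, M.μ_inf a ha]
    · simp [Equiv.Perm.mul_apply, M.μ_zero a ha]
  rw [← hconj, (M.commute_optionNeg_mu hs ha).eq, mul_assoc, optionNeg_mul_self, mul_one]

theorem mu_inv (hs : M.Special) {a : U} (ha : a ≠ 0) : (M.μ a)⁻¹ = M.μ a := by
  rw [← M.mu_neg ha, M.mu_neg_eq_mu hs ha]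

theorem mu_mul_self (hs : M.Special) {a : U} (ha : a ≠ 0) : M.μ a * M.μ a = 1 := by
  nth_rw 1 [← M.mu_inv hs ha]
  exact inv_mul_cancel _

theorem hmap_neg_left (hs : M.Special) (a x : U) : M.hmap (-a) x = M.hmap a x := by
  by_cases ha : a = 0
  · simp [ha]
  · simp only [hmap, if_neg ha, if_neg (neg_ne_zero.2 ha), M.mu_neg_eq_mu hs ha]

/-- Evaluate `μ_x = μ_x⁻¹ = α_{xτ}^τ α_{-x} α_{xτ}^τ` at `zτ`, `z = (x+y)τ - xτ`: the three
factors send it to `x + y`, to `y`, and to `(yτ + xτ)τ`. -/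
theorem hmap_pact_tau_add_sub (hs : M.Special) (hτ : M.τ * M.τ = 1) {x y : U} (hx : x ≠ 0)
    (hy : y ≠ 0) (hxy : x + y ≠ 0) :
    M.hmap x (pact M.τ (x + y) - pact M.τ x) = pact M.τ (pact M.τ y + pact M.τ x) := by
  have key : M.μ x (M.τ (some (pact M.τ (x + y) - pact M.τ x))) =
      M.τ (some (pact M.τ y + pact M.τ x)) := by
    rw [← M.mu_inv hs hx, M.mu_eq_doubleCoset hs hτ hx, doubleCoset_inv, neg_neg]
    simp only [Equiv.Perm.mul_apply, alphaTau_apply_tau, alphaPerm_some, sub_add_cancel,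
      M.tau_some_pact_tau hτ hxy, add_neg_cancel_comm]
    rw [← M.tau_some_pact_tau hτ hy, alphaTau_apply_tau, alphaPerm_some]
  exact (pact_eq_of_apply_some (key.symm.trans (M.mu_tau_apply_some hx _))).symm

theorem hmap_pact_tau_add (hs : M.Special) (hτ : M.τ * M.τ = 1) {x y : U} (hx : x ≠ 0)
    (hy : y ≠ 0) (hxy : x + y ≠ 0) :
    M.hmap x (pact M.τ (x + y)) = pact M.τ (pact M.τ x + pact M.τ y) - x := by
  rw [← sub_add_cancel (pact M.τ (x + y)) (pact M.τ x), M.hmap_add,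
    M.hmap_pact_tau_add_sub hs hτ hx hy hxy, M.hmap_pact_tau_self hs hτ hx,
    add_comm (pact M.τ y), sub_eq_add_neg]

theorem hmap₂_pact_tau_self (hs : M.Special) (hτ : M.τ * M.τ = 1) {a : U} (ha : a ≠ 0)
    (d : U) : M.hmap₂ a d (pact M.τ a) = -(2 • d) := by
  rw [hmap₂]
  by_cases hd : d = 0
  · simp [hd, hmap_zero_left]
  by_cases had : a + d = 0
  · rw [had, hmap_zero_left, eq_neg_of_add_eq_zero_right had, M.hmap_neg_left hs,
      M.hmap_pact_tau_self hs hτ ha]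
    abel
  have hsum : -d + (a + d) = a := by abel
  have h1 := M.hmap_pact_tau_add hs hτ had (neg_ne_zero.2 hd) (by rwa [add_neg_cancel_right])
  have h2 := M.hmap_pact_tau_add hs hτ (neg_ne_zero.2 hd) had (by rwa [hsum])
  rw [add_neg_cancel_right] at h1
  rw [hsum, M.hmap_neg_left hs, add_comm (pact M.τ (-d))] at h2
  rw [h1, h2, M.hmap_pact_tau_self hs hτ ha]
  abel

theorem hmap₂_cocycle (a b c x : U) :
    M.hmap₂ (a + b) c x + M.hmap₂ a b x = M.hmap₂ a (b + c) x + M.hmap₂ b c x := by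
  simp only [hmap₂, add_assoc]
  abel

end AddCommGroup

end MoufangSet

/-- Let `M(U, τ)` be a special Moufang set with `U` abelian, `τ = μ_e`,
and `a ∈ U^#`.  Then for all `b, c ∈ U`: `(aτ) · h_{a+b,c} = −2c + (aτ) · h_{b,c}`. -/
theorem stmt_9 [AddCommGroup U] (M : MoufangSet U) (hs : M.Special)
    (e : U) (he : e ≠ 0) (hτ : M.τ = M.μ e) (a : U) (ha : a ≠ 0) (b c : U) :
    M.hmap₂ (a + b) c (pact M.τ a) = -(2 • c) + M.hmap₂ b c (pact M.τ a) := by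
  have hτ_sq : M.τ * M.τ = 1 := by
    rw [hτ]
    exact M.mu_mul_self hs he
  have hcocycle := M.hmap₂_cocycle a b c (pact M.τ a)
  rw [M.hmap₂_pact_tau_self hs hτ_sq ha, M.hmap₂_pact_tau_self hs hτ_sq ha] at hcocycle
  rw [eq_sub_of_add_eq hcocycle, smul_add]
  abel
end

section
/- Let E be the field F₉ viewed as an F₃-vector space and K ⊆ End_{F₃}(E) a subring that is a field of order 9 containing the identity. Then the evaluation map f : K → E, α ↦ (1_E)·α, is a bijection; in fact it is an isomorphism of additive groups. -/
instance : Fact (Nat.Prime 3) := ⟨by norm_num⟩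

/-!
Every nonzero `α ∈ K` has an inverse `β ∈ K`, and `β (α 1) = 1 ≠ 0`, so evaluation at `1` is an
injective additive map `K → F₉`; both sides have 9 elements, hence it is bijective.
-/

namespace Subring

variable {R M : Type*} [Semiring R] [AddCommGroup M] [Module R M]

def evalAddHom (K : Subring (Module.End R M)) (v : M) : K →+ M :=
  AddMonoidHom.mk' (fun α => (α : Module.End R M) v) fun _ _ => rfl

theorem evalAddHom_injective_of_isField (K : Subring (Module.End R M)) (hK : IsField K)
    {v : M} (hv : v ≠ 0) : Function.Injective (K.evalAddHom v) := by
  refine (injective_iff_map_eq_zero _).2 fun α (hα : (α : Module.End R M) v = 0) => ?_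
  by_contra hα0
  obtain ⟨β, hαβ⟩ := hK.mul_inv_cancel hα0
  have hβα : ((β * α : K) : Module.End R M) v = v := by
    rw [hK.mul_comm, hαβ]
    rfl
  apply hv
  rw [← hβα, Subring.coe_mul, Module.End.mul_apply, hα, map_zero]

end Subring

/-- Let `E = F₉` viewed as an `F₃`-vector space and
`K ⊆ End_{F₃}(E)` a subring that is a field of order 9 (containing the identity, as every
subring does).  Then the evaluation map `f : K → E`, `α ↦ (1_E)·α`, is a bijection; in fact
it is an isomorphism of additive groups. -/
theorem stmt_13 (K : Subring (Module.End (ZMod 3) (GaloisField 3 2)))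
    (hK : IsField K) (hcard : Nat.card K = 9) :
    Function.Bijective
      (fun α : K => (α : Module.End (ZMod 3) (GaloisField 3 2)) (1 : GaloisField 3 2)) ∧
    ∀ α β : K,
      ((α + β : K) : Module.End (ZMod 3) (GaloisField 3 2)) (1 : GaloisField 3 2)
        = (α : Module.End (ZMod 3) (GaloisField 3 2)) (1 : GaloisField 3 2)
          + (β : Module.End (ZMod 3) (GaloisField 3 2)) (1 : GaloisField 3 2) := by
  have hcardE : Nat.card (GaloisField 3 2) = 9 := GaloisField.card 3 2 two_ne_zero
  refine ⟨?_, map_add (K.evalAddHom 1)⟩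
  rw [Nat.bijective_iff_injective_and_card, hcard, hcardE]
  exact ⟨K.evalAddHom_injective_of_isField hK one_ne_zero, rfl⟩
end

section
/- Let G be a group acting sharply 2-transitively on a set Ω with at least 3 elements, and suppose N is a normal subgroup of G acting regularly on Ω such that every element of N is a product of two involutions of G. Then N is abelian. -/
/-- Let `G` be a group acting sharply 2-transitively on a set `Ω` with at
least 3 elements, and suppose `N` is a normal subgroup of `G` acting regularly on `Ω` such
that every element of `N` is a product of two involutions of `G`.  Then `N` is abelian. -/
theorem stmt_15 {G Ω : Type*} [Group G] [MulAction G Ω]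
    (hΩ : ∃ x y z : Ω, x ≠ y ∧ x ≠ z ∧ y ≠ z)
    (h2trans : ∀ x y z w : Ω, x ≠ y → z ≠ w → ∃! g : G, g • x = z ∧ g • y = w)
    (N : Subgroup G) (hN : N.Normal)
    (hreg : ∀ x y : Ω, ∃! n : N, (n : G) • x = y)
    (hinv : ∀ n ∈ N, ∃ s t : G, s ≠ 1 ∧ t ≠ 1 ∧ s ^ 2 = 1 ∧ t ^ 2 = 1 ∧ n = s * t) :
    ∀ a ∈ N, ∀ b ∈ N, a * b = b * a := by
  classical
  obtain ⟨p, q, r, hpq, hpr, hqr⟩ := hΩ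
  -- only the identity fixes two distinct points
  have sharp : ∀ (g : G) (x z : Ω), x ≠ z → g • x = x → g • z = z → g = 1 := by
    intro g x z hxz hgx hgz
    obtain ⟨u, -, hu⟩ := h2trans x z x z hxz hxz
    have h1 := hu g ⟨hgx, hgz⟩
    have h2 := hu 1 ⟨one_smul G x, one_smul G z⟩
    rw [h1, h2]
  -- uniqueness of the element of N carrying x to a given point
  have regU : ∀ (x : Ω) (m m' : G), m ∈ N → m' ∈ N → m • x = m' • x → m = m' := by
    intro x m m' hm hm' hsm
    obtain ⟨n, -, hu⟩ := hreg x (m' • x)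
    have h1 := hu ⟨m, hm⟩ hsm
    have h2 := hu ⟨m', hm'⟩ rfl
    have h3 : (⟨m, hm⟩ : N) = ⟨m', hm'⟩ := h1.trans h2.symm
    exact congrArg Subtype.val h3
  -- nontrivial elements of N move every point
  have moveNe : ∀ (m : G), m ∈ N → m ≠ 1 → ∀ x : Ω, m • x ≠ x := by
    intro m hm hm1 x heq
    exact hm1 (regU x m 1 hm N.one_mem (by rw [one_smul]; exact heq))
  -- conjugation formula at a fixed point
  have conjPt : ∀ (g m : G) (x : Ω), g • x = x → (g * m * g⁻¹) • x = g • (m • x) := by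
    intro g m x hgx
    have hginv : g⁻¹ • x = x := by
      conv_lhs => rw [← hgx]
      rw [inv_smul_smul]
    rw [mul_smul, mul_smul, hginv]
  -- any two nontrivial elements of N are conjugate by an element fixing a given point
  have conjex : ∀ (y : Ω) (a b : G), a ∈ N → b ∈ N → a ≠ 1 → b ≠ 1 →
      ∃ g : G, g • y = y ∧ g * a * g⁻¹ = b := by
    intro y a b ha hb ha1 hb1
    obtain ⟨g, ⟨hg1, hg2⟩, -⟩ := h2trans y (a • y) y (b • y)
      (Ne.symm (moveNe a ha ha1 y)) (Ne.symm (moveNe b hb hb1 y))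
    refine ⟨g, hg1, ?_⟩
    refine regU y _ _ (hN.conj_mem a ha g) hb ?_
    rw [conjPt g a y hg1, hg2]
  intro a ha b hb
  by_cases hcase : ∃ n, n ∈ N ∧ n ≠ 1 ∧ n * n = 1
  · -- Case 1: N contains an involution, hence has exponent 2
    obtain ⟨n₀, hn₀, hn₀1, hn₀2⟩ := hcase
    have sq : ∀ m, m ∈ N → m * m = 1 := by
      intro m hm
      by_cases hm1 : m = 1
      · rw [hm1, one_mul]
      · obtain ⟨g, -, hg⟩ := conjex p n₀ m hn₀ hm hn₀1 hm1
        calc m * m = (g * n₀ * g⁻¹) * (g * n₀ * g⁻¹) := by rw [hg]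
          _ = g * (n₀ * n₀) * g⁻¹ := by group
          _ = 1 := by rw [hn₀2]; group
    have hainv : a⁻¹ = a := inv_eq_of_mul_eq_one_right (sq a ha)
    have hbinv : b⁻¹ = b := inv_eq_of_mul_eq_one_right (sq b hb)
    have habinv : (a * b)⁻¹ = a * b := inv_eq_of_mul_eq_one_right (sq _ (N.mul_mem ha hb))
    calc a * b = (a * b)⁻¹ := habinv.symm
      _ = b⁻¹ * a⁻¹ := mul_inv_rev a b
      _ = b * a := by rw [hainv, hbinv]
  · -- Case 2: N has no 2-torsion
    push_neg at hcase
    have notwo : ∀ m, m ∈ N → m * m = 1 → m = 1 := by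
      intro m hm hmm
      by_contra hm1
      exact hcase m hm hm1 hmm
    -- a base point y and a nontrivial element e of N
    set y := p with hy
    obtain ⟨e0, he0, -⟩ := hreg p q
    set e : G := (e0 : G) with hedef
    have heN : e ∈ N := e0.2
    have he : e • y = q := he0
    have he1 : e ≠ 1 := by
      intro h
      rw [h, one_smul] at he
      exact hpq he
    -- the element ρ fixing y and inverting e
    have heinvN : e⁻¹ ∈ N := N.inv_mem heN
    have heinv1 : e⁻¹ ≠ 1 := inv_ne_one.mpr he1
    obtain ⟨ρ, hρy, hconjE⟩ := conjex y e e⁻¹ heN heinvN he1 heinv1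
    have hρ1 : ρ ≠ 1 := by
      intro h
      rw [h] at hconjE
      have : e = e⁻¹ := by
        rw [← hconjE]; group
      exact he1 (notwo e heN (mul_eq_one_iff_eq_inv.mpr this))
    -- centralizer-freeness: an element fixing y and centralizing a nontrivial m ∈ N is 1
    have CF : ∀ (c m : G), m ∈ N → m ≠ 1 → c • y = y → c * m * c⁻¹ = m → c = 1 := by
      intro c m hm hm1 hcy hcm
      have h2 : c • (m • y) = m • y := by
        rw [← conjPt c m y hcy, hcm]
      exact sharp c y (m • y) (Ne.symm (moveNe m hm hm1 y)) hcy h2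
    -- ρ is an involution
    have hρρ : ρ * ρ = 1 := by
      have h1 : ρ * e⁻¹ * ρ⁻¹ = (ρ * e * ρ⁻¹)⁻¹ := by group
      rw [hconjE, inv_inv] at h1
      have hc : (ρ * ρ) * e * (ρ * ρ)⁻¹ = e := by
        have : (ρ * ρ) * e * (ρ * ρ)⁻¹ = ρ * (ρ * e * ρ⁻¹) * ρ⁻¹ := by group
        rw [this, hconjE, h1]
      exact CF (ρ * ρ) e heN he1 (by rw [mul_smul, hρy, hρy]) hc
    -- e * e is a nontrivial element of N inverted by ρ
    have heeN : e * e ∈ N := N.mul_mem heN heN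
    have hee1 : e * e ≠ 1 := fun h => he1 (notwo e heN h)
    have heeK : ρ * (e * e) * ρ⁻¹ = (e * e)⁻¹ := by
      have h1 : ρ * (e * e) * ρ⁻¹ = (ρ * e * ρ⁻¹) * (ρ * e * ρ⁻¹) := by group
      rw [h1, hconjE]; group
    -- injectivity of the twisted map n ↦ (ρnρ⁻¹)·n⁻¹
    have hψinj : ∀ n m, n ∈ N → m ∈ N →
        (ρ * n * ρ⁻¹) * n⁻¹ = (ρ * m * ρ⁻¹) * m⁻¹ → n = m := by
      intro n m hn hm heq
      have h1 : (ρ * m * ρ⁻¹)⁻¹ * ((ρ * n * ρ⁻¹) * n⁻¹) * n = ρ * (m⁻¹ * n) * ρ⁻¹ := by group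
      have h2 : (ρ * m * ρ⁻¹)⁻¹ * ((ρ * m * ρ⁻¹) * m⁻¹) * n = m⁻¹ * n := by group
      rw [heq] at h1
      have hd : ρ * (m⁻¹ * n) * ρ⁻¹ = m⁻¹ * n := h1.symm.trans h2
      by_cases hd1 : m⁻¹ * n = 1
      · exact (inv_mul_eq_one.mp hd1).symm
      · exact absurd (CF ρ (m⁻¹ * n) (N.mul_mem (N.inv_mem hm) hn) hd1 hρy hd) hρ1
    -- main claim: ρ inverts every element of N
    have allK : ∀ n, n ∈ N → ρ * n * ρ⁻¹ = n⁻¹ := by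
      intro n hn
      by_cases hn1 : n = 1
      · rw [hn1]; group
      · -- u := ψ(n) is in N and inverted by ρ
        set u : G := (ρ * n * ρ⁻¹) * n⁻¹ with hudef
        have huN : u ∈ N := N.mul_mem (hN.conj_mem n hn ρ) (N.inv_mem hn)
        have huK : ρ * u * ρ⁻¹ = u⁻¹ := by
          have h1 : ρ * u * ρ⁻¹ =
              ((ρ * ρ) * n * (ρ * ρ)⁻¹) * (ρ * n * ρ⁻¹)⁻¹ := by rw [hudef]; group
          rw [hρρ] at h1
          rw [h1, hudef]; group
        have hu1 : u ≠ 1 := by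
          intro h
          have : ρ * n * ρ⁻¹ = n := by
            have := h ▸ hudef.symm
            -- u = 1 means (ρnρ⁻¹)·n⁻¹ = 1
            rw [hudef] at h
            calc ρ * n * ρ⁻¹ = ((ρ * n * ρ⁻¹) * n⁻¹) * n := by group
              _ = n := by rw [h]; group
          exact hρ1 (CF ρ n hn hn1 hρy this)
        -- k' := u⁻¹ is a nontrivial element of N inverted by ρ
        have hk'N : u⁻¹ ∈ N := N.inv_mem huN
        have hk'1 : u⁻¹ ≠ 1 := inv_ne_one.mpr hu1
        have hk'K : ρ * u⁻¹ * ρ⁻¹ = (u⁻¹)⁻¹ := by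
          have h1 : ρ * u⁻¹ * ρ⁻¹ = (ρ * u * ρ⁻¹)⁻¹ := by group
          rw [h1, huK, inv_inv]
        -- conjugate e*e to u⁻¹ by some h fixing y
        obtain ⟨h, hhy, hhconj⟩ := conjex y (e * e) u⁻¹ heeN hk'N hee1 hk'1
        -- ρ and h commute
        have hA : (ρ * h) * (e * e) * (ρ * h)⁻¹ = (u⁻¹)⁻¹ := by
          have h1 : (ρ * h) * (e * e) * (ρ * h)⁻¹ = ρ * (h * (e * e) * h⁻¹) * ρ⁻¹ := by group
          rw [h1, hhconj, hk'K]
        have hB : (h * ρ) * (e * e) * (h * ρ)⁻¹ = (u⁻¹)⁻¹ := by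
          have h1 : (h * ρ) * (e * e) * (h * ρ)⁻¹ = h * (ρ * (e * e) * ρ⁻¹) * h⁻¹ := by group
          rw [h1, heeK]
          have h2 : h * (e * e)⁻¹ * h⁻¹ = (h * (e * e) * h⁻¹)⁻¹ := by group
          rw [h2, hhconj]
        have hcy : ((h * ρ)⁻¹ * (ρ * h)) • y = y := by
          have hρh : (ρ * h) • y = y := by rw [mul_smul, hhy, hρy]
          have hhρ : (h * ρ) • y = y := by rw [mul_smul, hρy, hhy]
          have hhρinv : (h * ρ)⁻¹ • y = y := by
            conv_lhs => rw [← hhρ]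
            rw [inv_smul_smul]
          rw [mul_smul, hρh, hhρinv]
        have hcee : ((h * ρ)⁻¹ * (ρ * h)) * (e * e) * ((h * ρ)⁻¹ * (ρ * h))⁻¹ = e * e := by
          have h1 : ((h * ρ)⁻¹ * (ρ * h)) * (e * e) * ((h * ρ)⁻¹ * (ρ * h))⁻¹ =
              (h * ρ)⁻¹ * ((ρ * h) * (e * e) * (ρ * h)⁻¹) * (h * ρ) := by group
          rw [h1, hA, ← hB]; group
        have hcomm : ρ * h = h * ρ := by
          have := CF ((h * ρ)⁻¹ * (ρ * h)) (e * e) heeN hee1 hcy hcee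
          have h2 : (h * ρ) * ((h * ρ)⁻¹ * (ρ * h)) = (h * ρ) * 1 := by rw [this]
          calc ρ * h = (h * ρ) * ((h * ρ)⁻¹ * (ρ * h)) := by group
            _ = (h * ρ) * 1 := h2
            _ = h * ρ := mul_one _
        -- j := h e h⁻¹ is in N, inverted by ρ, and ψ(j) = u
        have hjN : h * e * h⁻¹ ∈ N := hN.conj_mem e heN h
        have hjK : ρ * (h * e * h⁻¹) * ρ⁻¹ = (h * e * h⁻¹)⁻¹ := by
          have h1 : ρ * (h * e * h⁻¹) * ρ⁻¹ = (ρ * h) * e * (ρ * h)⁻¹ := by group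
          rw [h1, hcomm]
          have h2 : (h * ρ) * e * (h * ρ)⁻¹ = h * (ρ * e * ρ⁻¹) * h⁻¹ := by group
          rw [h2, hconjE]; group
        have hψj : (ρ * (h * e * h⁻¹) * ρ⁻¹) * (h * e * h⁻¹)⁻¹ = u := by
          rw [hjK]
          have h1 : (h * e * h⁻¹)⁻¹ * (h * e * h⁻¹)⁻¹ = (h * (e * e) * h⁻¹)⁻¹ := by group
          rw [h1, hhconj, inv_inv]
        have : n = h * e * h⁻¹ := hψinj n (h * e * h⁻¹) hn hjN (by rw [hψj, hudef])
        rw [this]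
        exact hjK
    -- conclusion: inversion is an automorphism of N, so N is abelian
    have h1 : ρ * (a * b) * ρ⁻¹ = (a * b)⁻¹ := allK _ (N.mul_mem ha hb)
    have h2 : ρ * (a * b) * ρ⁻¹ = (ρ * a * ρ⁻¹) * (ρ * b * ρ⁻¹) := by group
    rw [allK a ha, allK b hb] at h2
    have h3 : (a * b)⁻¹ = a⁻¹ * b⁻¹ := h1.symm.trans h2
    calc a * b = ((a * b)⁻¹)⁻¹ := (inv_inv _).symm
      _ = (a⁻¹ * b⁻¹)⁻¹ := by rw [h3]
      _ = b * a := by group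
end

section
/- Let H be a finite group with a normal elementary abelian p-subgroup H₀ such that H/H₀ is cyclic of order prime to p, and let X be a finite solvable p′-group acting on H normalizing H₀. Then there exists an X-invariant complement for H₀ in H, i.e., a subgroup C ≤ H with C ∩ H₀ = 1 and C·H₀ = H that is normalized by X. -/
/-!
Put `G = H ⋊ X` and let `N` be the image of `H₀`: an abelian normal subgroup of `G` whose order,
a power of `p`, is prime to its index `[H : H₀] · |X|`. In this abelian case of
Schur–Zassenhaus the complements of `N` are exactly the stabilizers of points of
`N.QuotientDiff`, on which `N` acts transitively, so any two complements of `N` are conjugate.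
Applied inside `N ⊔ X`, this conjugates an arbitrary complement of `N` in `G` into one that
contains `X`; its intersection with `H` is then an `X`-invariant complement of `H₀`.
-/

open Subgroup MulAction SemidirectProduct

namespace Subgroup

variable {G : Type*} [Group G] {N K : Subgroup G}

noncomputable def IsComplement'.toQuotientDiff [IsMulCommutative N] [N.FiniteIndex]
    (h : IsComplement' N K) : N.QuotientDiff :=
  Quotient.mk'' ⟨K, h.symm⟩

theorem IsComplement'.stabilizer_toQuotientDiff [Finite G] [N.Normal] [IsMulCommutative N]
    (hN : (Nat.card N).Coprime N.index) (h : IsComplement' N K) :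
    stabilizer G h.toQuotientDiff = K := by
  have hle : K ≤ stabilizer G h.toQuotientDiff := fun k hk =>
    congrArg Quotient.mk'' (Subtype.ext (op_smul_coe_set (inv_mem hk)))
  refine (eq_of_le_of_card_ge hle ?_).symm
  have := (isComplement'_stabilizer_of_coprime (α := h.toQuotientDiff) hN).card_mul_card
  rw [← h.card_mul_card] at this
  exact (Nat.eq_of_mul_eq_mul_left Nat.card_pos this).le

theorem IsComplement'.exists_map_conj_eq [Finite G] [N.Normal] [IsMulCommutative N]
    (hN : (Nat.card N).Coprime N.index) {K' : Subgroup G} (h : IsComplement' N K)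
    (h' : IsComplement' N K') : ∃ g : G, K.map (MulAut.conj g).toMonoidHom = K' := by
  obtain ⟨n, hn⟩ := exists_smul_eq hN h.toQuotientDiff h'.toQuotientDiff
  refine ⟨n, ?_⟩
  rw [← h.stabilizer_toQuotientDiff hN, ← h'.stabilizer_toQuotientDiff hN, ← hn]
  exact (stabilizer_smul_eq_stabilizer_map_conj _ _).symm

theorem IsComplement'.comap {M : Type*} [Group M] {f : M →* G} (hf : Function.Injective f)
    (hN : N ≤ f.range) (h : IsComplement' N K) : IsComplement' (N.comap f) (K.comap f) := by
  refine isComplement'_of_disjoint_and_mul_eq_univ ?_ (Set.eq_univ_of_forall fun m => ?_)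
  · rw [disjoint_iff, ← comap_inf, h.disjoint.eq_bot, MonoidHom.comap_bot, f.ker_eq_bot_iff.mpr hf]
  · obtain ⟨⟨n, k⟩, hnk⟩ := h.2 (f m)
    obtain ⟨a, ha⟩ := hN n.2
    have hk : f (a⁻¹ * m) = k := by rw [map_mul, map_inv, ha, ← hnk, inv_mul_cancel_left]
    exact ⟨a, by simp [ha], a⁻¹ * m, by simp [hk], mul_inv_cancel_left a m⟩

theorem isComplement'_subgroupOf_sup [N.Normal] {L : Subgroup G} (hL : Disjoint N L) :
    IsComplement' (N.subgroupOf (N ⊔ L)) (L.subgroupOf (N ⊔ L)) := by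
  refine isComplement'_of_disjoint_and_mul_eq_univ ?_ (Set.eq_univ_of_forall fun m => ?_)
  · exact disjoint_def.mpr fun hN hL' => Subtype.ext (disjoint_def.mp hL hN hL')
  · obtain ⟨n, hn, l, hl, hnl⟩ := (normal_mul N L).le m.2
    exact ⟨⟨n, mem_sup_left hn⟩, hn, ⟨l, mem_sup_right hl⟩, hl, Subtype.ext hnl⟩

theorem exists_isComplement'_le_of_coprime [Finite G] [N.Normal] [IsMulCommutative N]
    (hN : (Nat.card N).Coprime N.index) {L : Subgroup G} (hL : Disjoint N L) :
    ∃ K : Subgroup G, IsComplement' N K ∧ L ≤ K := by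
  set M := N ⊔ L
  have hNM : (Nat.card (N.subgroupOf M)).Coprime (N.subgroupOf M).index := by
    rw [Nat.card_congr (subgroupOfEquivOfLe (le_sup_left : N ≤ M)).toEquiv]
    exact hN.coprime_dvd_right (relIndex_dvd_index_of_normal N M)
  -- Conjugate a complement of `N` inside `M` until its trace on `M` becomes `L`.
  let q : N.QuotientDiff := default
  have hq : IsComplement' N (stabilizer G q) := isComplement'_stabilizer_of_coprime hN
  obtain ⟨m, hm⟩ := (hq.comap M.subtype_injective (by simp [M])).exists_map_conj_eq hNM
    (isComplement'_subgroupOf_sup hL)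
  refine ⟨stabilizer G ((m : G) • q), isComplement'_stabilizer_of_coprime hN, fun l hl => ?_⟩
  have hlM : (⟨l, mem_sup_right hl⟩ : M) ∈ L.subgroupOf M := hl
  rw [← hm] at hlM
  obtain ⟨k, hk, hkl⟩ := hlM
  rw [stabilizer_smul_eq_stabilizer_map_conj]
  exact ⟨k, hk, congrArg Subtype.val hkl⟩

end Subgroup

namespace SemidirectProduct

variable {N G : Type*} [Group N] [Group G] {φ : G →* MulAut N}

instance [Finite N] [Finite G] : Finite (N ⋊[φ] G) :=
  Finite.of_equiv _ equivProd.symm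

theorem normal_map_inl {H₀ : Subgroup N} [H₀.Normal]
    (hφ : ∀ g, H₀.map (φ g).toMonoidHom ≤ H₀) : (H₀.map (inl : N →* N ⋊[φ] G)).Normal := by
  refine ⟨fun _ ⟨n, hn, hx⟩ x => ⟨x.left * φ x.right n * x.left⁻¹, ?_, ?_⟩⟩
  · exact Normal.conj_mem inferInstance _ (hφ _ ⟨n, hn, rfl⟩) _
  · subst hx
    ext <;> simp [mul_left, mul_right, inv_left, inv_right]

theorem index_map_inl (H₀ : Subgroup N) :
    (H₀.map (inl : N →* N ⋊[φ] G)).index = H₀.index * Nat.card G := by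
  rw [H₀.index_map_of_injective inl_injective, range_inl_eq_ker_rightHom, index_ker,
    rightHom.range_eq_top_of_surjective rightHom_surjective, card_top]

theorem disjoint_range_inl_range_inr :
    Disjoint (inl : N →* N ⋊[φ] G).range (inr : G →* N ⋊[φ] G).range := by
  rw [disjoint_iff_inf_le]
  rintro _ ⟨⟨n, rfl⟩, ⟨g, hg⟩⟩
  obtain rfl : n = 1 := by simpa using (congrArg left hg).symm
  simp

theorem inl_aut_mem_comap_inl_iff {K : Subgroup (N ⋊[φ] G)} {g : G} (hg : inr g ∈ K) (n : N) :
    φ g n ∈ K.comap inl ↔ n ∈ K.comap inl := by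
  rw [mem_comap, mem_comap, inl_aut, K.mul_mem_cancel_right (by simpa using inv_mem hg),
    K.mul_mem_cancel_left hg]

theorem map_comap_inl_of_inr_mem {K : Subgroup (N ⋊[φ] G)} {g : G} (hg : inr g ∈ K) :
    (K.comap inl).map (φ g).toMonoidHom = K.comap inl := by
  ext n
  rw [map_equiv_eq_comap_symm', mem_comap]
  convert inl_aut_mem_comap_inl_iff (g := g⁻¹) (by simpa using inv_mem hg) n using 2
  simp [map_inv]

end SemidirectProduct

theorem stmt_18_general {H : Type*} [Group H] [Finite H] (p : ℕ) (hp : p.Prime)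
    (H₀ : Subgroup H) (hnorm : H₀.Normal)
    (habel : ∀ a ∈ H₀, ∀ b ∈ H₀, a * b = b * a)
    (hexp : ∀ a ∈ H₀, a ^ p = 1)
    (hcop : ¬ p ∣ Nat.card (H ⧸ H₀))
    {X : Type*} [Group X] [Finite X] (hX : ¬ p ∣ Nat.card X)
    (φ : X →* MulAut H) (hφ : ∀ x : X, H₀.map (φ x).toMonoidHom = H₀) :
    ∃ C : Subgroup H, C ⊓ H₀ = ⊥ ∧ C ⊔ H₀ = ⊤ ∧
      ∀ x : X, C.map (φ x).toMonoidHom = C := by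
  have : Fact p.Prime := ⟨hp⟩
  have : IsMulCommutative H₀ := ⟨⟨fun a b => Subtype.ext (habel a a.2 b b.2)⟩⟩
  set N := H₀.map (inl : H →* H ⋊[φ] X)
  have : N.Normal := normal_map_inl fun x => (hφ x).le
  have hpN : IsPGroup p N :=
    IsPGroup.map (fun a => ⟨1, Subtype.ext (by simpa using hexp a a.2)⟩) _
  have hcopN : (Nat.card N).Coprime N.index := by
    obtain ⟨k, hk⟩ := IsPGroup.iff_card.mp hpN
    rw [hk, index_map_inl]
    exact (hp.coprime_pow_of_not_dvd (by simpa [hp.dvd_mul] using ⟨hcop, hX⟩)).symm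
  obtain ⟨K, hK, hXK⟩ := exists_isComplement'_le_of_coprime hcopN
    (disjoint_range_inl_range_inr.mono_left (map_le_range _ _))
  have hC : IsComplement' H₀ (K.comap inl) := by
    simpa [comap_map_eq_self_of_injective inl_injective] using
      hK.comap inl_injective (map_le_range _ _)
  exact ⟨K.comap inl, by rw [inf_comm, hC.disjoint.eq_bot], by rw [sup_comm, hC.sup_eq_top],
    fun x => map_comap_inl_of_inr_mem (hXK ⟨x, rfl⟩)⟩

/-- Let `H` be a finite group with a normal elementary abelian
`p`-subgroup `H₀` such that `H/H₀` is cyclic of order prime to `p`, and let `X` be a finite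
solvable `p′`-group acting on `H` (by automorphisms) normalizing `H₀`.  Then there exists an
`X`-invariant complement for `H₀` in `H`, i.e. a subgroup `C ≤ H` with `C ∩ H₀ = 1` and
`C·H₀ = H` that is normalized by `X`. -/
theorem stmt_18 {H : Type*} [Group H] [Finite H] (p : ℕ) (hp : p.Prime)
    (H₀ : Subgroup H) (hnorm : H₀.Normal)
    (habel : ∀ a ∈ H₀, ∀ b ∈ H₀, a * b = b * a)
    (hexp : ∀ a ∈ H₀, a ^ p = 1)
    (hcyc : IsCyclic (H ⧸ H₀)) (hcop : ¬ p ∣ Nat.card (H ⧸ H₀))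
    {X : Type*} [Group X] [Finite X] (hsolv : IsSolvable X) (hX : ¬ p ∣ Nat.card X)
    (φ : X →* MulAut H) (hφ : ∀ x : X, H₀.map (φ x).toMonoidHom = H₀) :
    ∃ C : Subgroup H, C ⊓ H₀ = ⊥ ∧ C ⊔ H₀ = ⊤ ∧
      ∀ x : X, C.map (φ x).toMonoidHom = C :=
  stmt_18_general p hp H₀ hnorm habel hexp hcop hX φ hφ
end
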